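/- arXiv:2408.14938 — 2 statements merged into one kernel-verified Lean document; each statement's English description precedes it below -/
import Mathlib

section
/- For odd p ≥ 3, u(B_W(p,2)) ≤ (p-1)/2, i.e., the closure of the braid (σ_1 σ_2^{-1} σ_3 ⋯ σ_{p-1}^{-1})² on p strands can be made into a trivial knot by (p-1)/2 crossing changes. -/
namespace Weaving

/-- A braid letter: 0-based generator index `k` (representing `σ_{k+1}`) and a sign
(`true` = positive crossing). -/
abbrev Letter := ℕ × Bool

/-- A braid diagram (word). Letters are read from top to bottom. -/
abbrev Word := List Letter

/-- Wellformedness of a word as a braid on `p` strands. -/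
def WF (p : ℕ) (w : Word) : Prop := ∀ l ∈ w, l.1 + 2 ≤ p

/-- One round `σ_1 σ_2^{-1} σ_3 ⋯ σ_{p-1}^{(-1)^p}` of the weaving braid on `p` strands. -/
def wRound (p : ℕ) : Word := (List.range (p - 1)).map fun k => (k, decide (k % 2 = 0))

/-- The weaving braid word `B_W(p,q) = (σ_1 σ_2^{-1} ⋯ σ_{p-1}^{(-1)^p})^q`. -/
def wWord (p q : ℕ) : Word := (List.replicate q (wRound p)).flatten

/-- The transposition of strand positions effected by one letter. -/
def letterPerm (l : Letter) : Equiv.Perm ℕ := Equiv.swap l.1 (l.1 + 1)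

/-- The permutation of a braid word: sends the top position of a strand to its
bottom position. -/
def permOfWord (w : Word) : Equiv.Perm ℕ := ((w.map letterPerm).reverse).prod

/-- The position permutation just before the `n`-th crossing (0-based). -/
def permUpTo (w : Word) (n : ℕ) : Equiv.Perm ℕ := permOfWord (w.take n)

/-- The label (top position) of the strand passing over at crossing `n`.
(Convention: at a positive letter `σ_k`, the strand at position `k` passes over.) -/
def overLabel (w : Word) (n : ℕ) : ℕ :=
  let l := w.getD n (0, true)
  (permUpTo w n)⁻¹ (if l.2 then l.1 else l.1 + 1)

/-- The label of the strand passing under at crossing `n`. -/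
def underLabel (w : Word) (n : ℕ) : ℕ :=
  let l := w.getD n (0, true)
  (permUpTo w n)⁻¹ (if l.2 then l.1 + 1 else l.1)

/-- The number of warping crossing points of the braid diagram `w` with respect to a
priority (ordering of base points) `r` on the strand labels: a crossing is warping
if the strand whose base point comes earlier passes under. -/
def warpCount (w : Word) (r : ℕ → ℕ) : ℕ :=
  ((List.range w.length).filter fun n =>
    decide (r (underLabel w n) < r (overLabel w n))).length

/-- The warping degree of a braid diagram: the minimum of `warpCount` over all
orderings of the base points at the tops of the strands. -/
noncomputable def warpingDegree (w : Word) : ℕ :=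
  sInf { m | ∃ r : ℕ → ℕ, Function.Injective r ∧ warpCount w r = m }

/-- A sequence of base points (a list enumerating the strands `0,…,p-1`) follows the
closure if, whenever the closure-successor of the current strand has not yet appeared,
it is the next base point. -/
def FollowsClosure (p : ℕ) (w : Word) (bs : List ℕ) : Prop :=
  bs.Perm (List.range p) ∧ ∀ m, m + 1 < bs.length →
    permOfWord w (bs.getD m 0) ∉ bs.take (m + 1) →
    bs.getD (m + 1) 0 = permOfWord w (bs.getD m 0)

/-- The closed warping degree of a braid diagram. -/
noncomputable def closedWarpingDegree (p : ℕ) (w : Word) : ℕ :=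
  sInf { m | ∃ bs : List ℕ, FollowsClosure p w bs ∧
    warpCount w (fun a => List.idxOf a bs) = m }

/-- The strands of the closure component of strand `i`, in traversal order. -/
def strandCycle (w : Word) (p i : ℕ) : List ℕ :=
  ((List.range p).map fun t => ((permOfWord w)^[t]) i).dedup

/-- The crossings met by strand `i` from top to bottom, with a flag recording whether
the strand passes under there. -/
def strandPassages (w : Word) (i : ℕ) : List (ℕ × Bool) :=
  ((List.range w.length).filter fun n =>
    (overLabel w n == i) || (underLabel w n == i)).map
    fun n => (n, underLabel w n == i)

/-- All the crossing passages of the closure component of strand `i`, in the cyclic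
order in which they are traversed starting from the top of strand `i`. -/
def compPassages (w : Word) (p i : ℕ) : List (ℕ × Bool) :=
  (strandCycle w p i).flatMap (strandPassages w)

/-- `starts` contains exactly one strand representative on each closure component. -/
def ValidStarts (p : ℕ) (w : Word) (starts : List ℕ) : Prop :=
  ∀ i < p, ∃! s, s ∈ starts ∧ i ∈ strandCycle w p s

/-- The passage sequence of the whole closure diagram determined by a choice of
base points: component representatives `starts` and rotations `ts` (positions of the
base points along the components). -/
def fullTraversal (w : Word) (p : ℕ) (starts ts : List ℕ) : List (ℕ × Bool) :=
  ((starts.zip ts).map fun st => (compPassages w p st.1).rotate st.2).flatten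

/-- Same, for the reversed orientation of the closure. -/
def fullTraversalRev (w : Word) (p : ℕ) (starts ts : List ℕ) : List (ℕ × Bool) :=
  ((starts.zip ts).map fun st => ((compPassages w p st.1).reverse).rotate st.2).flatten

/-- Crossing `n` is a warping crossing point of the traversal `T` if it is first met
as an under-crossing. -/
def warpInTraversal (T : List (ℕ × Bool)) (n : ℕ) : Bool :=
  ((T.filter fun x => x.1 == n).headD (0, false)).2

def traversalWarpCount (w : Word) (T : List (ℕ × Bool)) : ℕ :=
  ((List.range w.length).filter fun n => warpInTraversal T n).length

/-- The warping degree of the closure diagram of `w` (with the braid orientation):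
the minimum number of warping crossing points over all choices of base points. -/
noncomputable def closureWarpingDegree (p : ℕ) (w : Word) : ℕ :=
  sInf { m | ∃ starts ts : List ℕ, ValidStarts p w starts ∧ ts.length = starts.length ∧
    traversalWarpCount w (fullTraversal w p starts ts) = m }

/-- The warping degree of the closure diagram of `w` with reversed orientation. -/
noncomputable def closureWarpingDegreeRev (p : ℕ) (w : Word) : ℕ :=
  sInf { m | ∃ starts ts : List ℕ, ValidStarts p w starts ∧ ts.length = starts.length ∧
    traversalWarpCount w (fullTraversalRev w p starts ts) = m }

/-- Relations of the braid group on `p` strands (generators `0,…,p-2`). -/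
def braidRels (p : ℕ) : Set (FreeGroup (Fin (p - 1))) :=
  { r | (∃ i j : Fin (p - 1), (i : ℕ) + 1 = (j : ℕ) ∧
          r = FreeGroup.of i * FreeGroup.of j * FreeGroup.of i *
              (FreeGroup.of j * FreeGroup.of i * FreeGroup.of j)⁻¹) ∨
        (∃ i j : Fin (p - 1), (i : ℕ) + 2 ≤ (j : ℕ) ∧
          r = FreeGroup.of i * FreeGroup.of j * (FreeGroup.of j * FreeGroup.of i)⁻¹) }

/-- The braid group on `p` strands. -/
abbrev BraidGroup (p : ℕ) := PresentedGroup (braidRels p)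

def letterToBraid (p : ℕ) (l : Letter) : BraidGroup p :=
  if h : l.1 < p - 1 then
    (if l.2 then PresentedGroup.of ⟨l.1, h⟩ else (PresentedGroup.of ⟨l.1, h⟩)⁻¹)
  else 1

/-- The element of the braid group represented by a word. -/
def toBraid (p : ℕ) (w : Word) : BraidGroup p := (w.map (letterToBraid p)).prod

/-- Markov moves on closed braid diagrams: braid-group equality, conjugation
(cyclic permutation), and (de)stabilization. -/
inductive MarkovStep : ℕ × Word → ℕ × Word → Prop
  | braid (p : ℕ) (w w' : Word) : WF p w → WF p w' → toBraid p w = toBraid p w' →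
      MarkovStep (p, w) (p, w')
  | conj (p : ℕ) (w₁ w₂ : Word) : WF p (w₁ ++ w₂) → MarkovStep (p, w₁ ++ w₂) (p, w₂ ++ w₁)
  | stab (p : ℕ) (w : Word) (b : Bool) : WF p w → 1 ≤ p →
      MarkovStep (p, w) (p + 1, w ++ [(p - 1, b)])

/-- Two closed braid diagrams represent the same link iff they are Markov equivalent. -/
def MarkovEquiv : ℕ × Word → ℕ × Word → Prop := Relation.EqvGen MarkovStep

/-- The closure of `(p, w)` represents a trivial link (an unlink). -/
def IsTrivialClosure (p : ℕ) (w : Word) : Prop := ∃ r : ℕ, MarkovEquiv (p, w) (r, [])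

/-- The canonical representative (minimum label) of the closure component of strand `i`. -/
def orbitMin (w : Word) (p i : ℕ) : ℕ := (strandCycle w p i).foldr min i

/-- The number of components of the closure of `(p, w)`. -/
def numComponents (p : ℕ) (w : Word) : ℕ := ((Finset.range p).image (orbitMin w p)).card

/-- The closure of `(p, w)` is the unknot. -/
def IsUnknot (p : ℕ) (w : Word) : Prop := IsTrivialClosure p w ∧ numComponents p w = 1

/-- Apply crossing changes at the set `S` of crossing indices. -/
def flipAt (w : Word) (S : Finset ℕ) : Word :=
  w.zipIdx.map fun nl => if nl.2 ∈ S then (nl.1.1, !nl.1.2) else nl.1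

/-- `u(B)`: the minimum number of crossing changes on the braid diagram `w` making its
closure a trivial link. -/
noncomputable def braidUnknottingNumber (p : ℕ) (w : Word) : ℕ :=
  sInf { m | ∃ S : Finset ℕ, S ⊆ Finset.range w.length ∧ S.card = m ∧
    IsTrivialClosure p (flipAt w S) }

/-- The unknotting (unlinking) number of the link represented by the closure of
`(p, w)`: the minimum number of crossing changes over all diagrams of the link. -/
noncomputable def linkUnknottingNumber (p : ℕ) (w : Word) : ℕ :=
  sInf { m | ∃ p' w', MarkovEquiv (p, w) (p', w') ∧
    ∃ S : Finset ℕ, S ⊆ Finset.range w'.length ∧ S.card = m ∧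
      IsTrivialClosure p' (flipAt w' S) }

/-- The sign of crossing `n` (all strands oriented downwards). -/
def crossingSign (w : Word) (n : ℕ) : ℤ := if (w.getD n (0, true)).2 then 1 else -1

/-- The linking number of the closure components of strands `i` and `j` (assumed to lie
on distinct components): half the signed count of their mutual crossings. -/
def lk (w : Word) (i j : ℕ) : ℤ :=
  (∑ n ∈ Finset.range w.length,
    if (overLabel w n = i ∧ underLabel w n = j) ∨ (overLabel w n = j ∧ underLabel w n = i)
    then crossingSign w n else 0) / 2

/-- The linking number between the closure components represented by `a` and `b`. -/
def compLk (p : ℕ) (w : Word) (a b : ℕ) : ℤ :=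
  (∑ n ∈ Finset.range w.length,
    if (orbitMin w p (overLabel w n) = a ∧ orbitMin w p (underLabel w n) = b) ∨
       (orbitMin w p (overLabel w n) = b ∧ orbitMin w p (underLabel w n) = a)
    then crossingSign w n else 0) / 2

/-- A link is proper if the total linking number of each component with all the
others is even. -/
def IsProper (p : ℕ) (w : Word) : Prop :=
  ∀ a ∈ (Finset.range p).image (orbitMin w p),
    (2 : ℤ) ∣ ∑ b ∈ ((Finset.range p).image (orbitMin w p)).erase a, compLk p w a b

/-- The closure of `(p, w)` is a split link. -/
def IsSplit (p : ℕ) (w : Word) : Prop :=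
  ∃ p' w', MarkovEquiv (p, w) (p', w') ∧ WF p' w' ∧
    ∃ k, k + 1 < p' ∧ ∀ l ∈ w', l.1 ≠ k

/-- The connected sum diagram of the closures of a braid on `a` strands and a braid on
`b` strands, as a braid on `a + b - 1` strands sharing one strand. -/
def connSum (a : ℕ) (w₁ w₂ : Word) : Word := w₁ ++ w₂.map fun l => (l.1 + (a - 1), l.2)

/-- The closure of `(p, w)` is a prime link: it is not the unknot and in every
connected-sum decomposition one factor is the unknot. -/
def IsPrime (p : ℕ) (w : Word) : Prop :=
  ¬ IsUnknot p w ∧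
  ∀ a b : ℕ, ∀ w₁ w₂ : Word, 1 ≤ a → 1 ≤ b → WF a w₁ → WF b w₂ →
    MarkovEquiv (p, w) (a + b - 1, connSum a w₁ w₂) →
    IsUnknot a w₁ ∨ IsUnknot b w₂


/-! ### Auxiliary development for the proof -/

section Aux

lemma mk_rel {p : ℕ} {r : FreeGroup (Fin (p-1))} (hr : r ∈ braidRels p) :
    (QuotientGroup.mk r : BraidGroup p) = 1 :=
  (QuotientGroup.eq_one_iff r).mpr (Subgroup.subset_normalClosure hr)

lemma of_comm {p : ℕ} (i j : Fin (p-1)) (h : (i:ℕ)+2 ≤ j) :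
    Commute (PresentedGroup.of (rels := braidRels p) i) (PresentedGroup.of j) := by
  have h1 := mk_rel (p := p) (Or.inr ⟨i, j, h, rfl⟩)
  simp only [QuotientGroup.mk_mul, QuotientGroup.mk_inv, mul_inv_eq_one] at h1
  exact h1

lemma of_braid {p : ℕ} (i j : Fin (p-1)) (h : (i:ℕ)+1 = j) :
    PresentedGroup.of (rels := braidRels p) i * PresentedGroup.of j * PresentedGroup.of i
    = PresentedGroup.of j * PresentedGroup.of i * PresentedGroup.of j := by
  have h1 := mk_rel (p := p) (Or.inl ⟨i, j, h, rfl⟩)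
  simp only [QuotientGroup.mk_mul, QuotientGroup.mk_inv, mul_inv_eq_one] at h1
  exact h1

lemma letterToBraid_neg (p : ℕ) (i : ℕ) :
    letterToBraid p (i, false) = (letterToBraid p (i, true))⁻¹ := by
  unfold letterToBraid
  by_cases h : i < p - 1 <;> simp [h]

lemma letter_comm {p : ℕ} (l l' : Letter) (h : l.1 + 2 ≤ l'.1) :
    Commute (letterToBraid p l) (letterToBraid p l') := by
  obtain ⟨i, bi⟩ := l; obtain ⟨j, bj⟩ := l'
  unfold letterToBraid
  simp only at h ⊢
  by_cases hi : i < p - 1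
  · by_cases hj : j < p - 1
    · simp only [dif_pos hi, dif_pos hj]
      have hc : Commute (PresentedGroup.of (rels := braidRels p) ⟨i, hi⟩)
          (PresentedGroup.of ⟨j, hj⟩) := of_comm _ _ h
      cases bi <;> cases bj <;> simp only [Bool.false_eq_true, if_true, if_false] <;>
        [exact hc.inv_left.inv_right; exact hc.inv_left; exact hc.inv_right; exact hc]
    · simp [dif_neg hj, Commute.one_right]
  · simp [dif_neg hi, Commute.one_left]

lemma letter_braid_rel {p : ℕ} (i : ℕ) (h : i + 1 < p - 1) :
    letterToBraid p (i, true) * letterToBraid p (i+1, true) * letterToBraid p (i, true)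
    = letterToBraid p (i+1, true) * letterToBraid p (i, true) * letterToBraid p (i+1, true) := by
  have hi : i < p - 1 := by omega
  unfold letterToBraid
  simp only [dif_pos hi, dif_pos h, if_true]
  exact of_braid ⟨i, hi⟩ ⟨i+1, h⟩ rfl

lemma toBraid_append (p : ℕ) (w₁ w₂ : Word) :
    toBraid p (w₁ ++ w₂) = toBraid p w₁ * toBraid p w₂ := by
  simp [toBraid]

lemma toBraid_single (p : ℕ) (l : Letter) : toBraid p [l] = letterToBraid p l := by
  simp [toBraid]

lemma toBraid_cons (p : ℕ) (l : Letter) (w : Word) :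
    toBraid p (l :: w) = letterToBraid p l * toBraid p w := by
  simp [toBraid]

lemma toBraid_comm {p : ℕ} (w : Word) (x : BraidGroup p)
    (h : ∀ l ∈ w, Commute (letterToBraid p l) x) : Commute (toBraid p w) x := by
  induction w with
  | nil =>
      simp only [toBraid, List.map_nil, List.prod_nil]
      exact Commute.one_left x
  | cons a t ih =>
      rw [toBraid_cons]
      exact (h a (by simp)).mul_left (ih fun l hl => h l (by simp [hl]))

/-- All-positive round `σ₁ ⋯ σₙ` (generators `0,…,n-1`). -/
def posR (n : ℕ) : Word := (List.range n).map fun k => (k, true)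

/-- Alternating round with `n` letters. -/
def altR (n : ℕ) : Word := (List.range n).map fun k => (k, decide (k % 2 = 0))

lemma length_posR (n : ℕ) : (posR n).length = n := by simp [posR]

lemma length_altR (n : ℕ) : (altR n).length = n := by simp [altR]

lemma WF_posR {p n : ℕ} (h : n + 1 ≤ p) : WF p (posR n) := by
  intro l hl
  simp only [posR, List.mem_map, List.mem_range] at hl
  obtain ⟨k, hk, rfl⟩ := hl
  simp only
  omega

lemma WF_altR {p n : ℕ} (h : n + 1 ≤ p) : WF p (altR n) := by
  intro l hl
  simp only [altR, List.mem_map, List.mem_range] at hl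
  obtain ⟨k, hk, rfl⟩ := hl
  simp only
  omega

lemma WF_append {p : ℕ} {w₁ w₂ : Word} (h₁ : WF p w₁) (h₂ : WF p w₂) : WF p (w₁ ++ w₂) := by
  intro l hl
  rcases List.mem_append.mp hl with h | h
  · exact h₁ l h
  · exact h₂ l h

lemma WF_single {p k : ℕ} {b : Bool} (h : k + 2 ≤ p) : WF p [(k, b)] := by
  intro l hl
  simp only [List.mem_singleton] at hl
  subst hl
  exact h

lemma posR_succ (n : ℕ) : posR (n+1) = posR n ++ [(n, true)] := by
  simp [posR, List.range_succ]

lemma altR_split (m : ℕ) :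
    altR (2*m+2) = altR (2*m) ++ [(2*m, true), (2*m+1, false)] := by
  have h1 : (2*m) % 2 = 0 := by omega
  have h2 : (2*m+1) % 2 = 1 := by omega
  simp [altR, List.range_succ, h1, h2]

end Aux

section Markov

/-- Braid commutes with the stabilizing generator. -/
lemma comm_altR {m : ℕ} :
    Commute (toBraid (2*m+3) (altR (2*m))) (letterToBraid (2*m+3) (2*m+1, true)) := by
  apply toBraid_comm
  intro l hl
  simp only [altR, List.mem_map, List.mem_range] at hl
  obtain ⟨k, hk, rfl⟩ := hl
  exact letter_comm _ _ (by simp only; omega)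

/-- Main braid-move identity:
`δ' g B s g⁻¹ = δ' B s⁻¹ g s` where `g = σ_{2m+2}`, `s = σ_{2m+1}`. -/
lemma braid_eq1 (m : ℕ) :
    toBraid (2*m+3) (posR (2*m+2) ++ altR (2*m+2))
      = toBraid (2*m+3) (posR (2*m+1) ++ altR (2*m)
          ++ [(2*m, false), (2*m+1, true), (2*m, true)]) := by
  have hrel := letter_braid_rel (p := 2*m+3) (2*m) (by omega)
  have hc := comm_altR (m := m)
  have main : ∀ P B g s : BraidGroup (2*m+3), B * g = g * B → s * g * s = g * s * g →
      P * (g * (B * (s * g⁻¹))) = P * (B * (s⁻¹ * (g * s))) := by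
    intro P B g s hcc hr
    have key : g * (s * g⁻¹) = s⁻¹ * (g * s) := by
      apply mul_left_cancel (a := s)
      rw [mul_inv_cancel_left, ← mul_assoc, ← mul_assoc, hr, mul_inv_cancel_right]
    rw [← mul_assoc g B, ← hcc, mul_assoc, key]
  rw [posR_succ, altR_split]
  simp only [toBraid_append, toBraid, List.map_append, List.map_cons, List.map_nil,
    List.prod_append, List.prod_cons, List.prod_nil, letterToBraid_neg, mul_assoc, mul_one]
  exact main _ _ _ _ hc.eq hrel

/-- Cancellation of `σ⁻¹ σ`. -/
lemma braid_eq2 (m : ℕ) :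
    toBraid (2*m+2) ((posR (2*m+1) ++ altR (2*m) ++ [(2*m, false)]) ++ [(2*m, true)])
      = toBraid (2*m+2) (posR (2*m+1) ++ altR (2*m)) := by
  simp [toBraid_append, toBraid_cons, toBraid, letterToBraid_neg, mul_assoc]

/-- One reduction step: from `p = 2m+3` strands to `2m+1` strands. -/
lemma step (m : ℕ) :
    MarkovEquiv (2*m+3, posR (2*m+2) ++ altR (2*m+2))
      (2*m+1, posR (2*m) ++ altR (2*m)) := by
  have h23 : (2*m+1) + 2 ≤ 2*m+3 := by omega
  have h22 : (2*m) + 2 ≤ 2*m+2 := by omega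
  have hwf0 : WF (2*m+3) (posR (2*m+2) ++ altR (2*m+2)) :=
    WF_append (WF_posR (by omega)) (WF_altR (by omega))
  have hwfP : WF (2*m+3) (posR (2*m+1)) := WF_posR (by omega)
  have hwfB : WF (2*m+3) (altR (2*m)) := WF_altR (by omega)
  have hwf1 : WF (2*m+3)
      (posR (2*m+1) ++ altR (2*m) ++ [(2*m, false), (2*m+1, true), (2*m, true)]) := by
    refine WF_append (WF_append hwfP hwfB) ?_
    intro l hl
    simp only [List.mem_cons, List.mem_singleton] at hl
    rcases hl with rfl | rfl | rfl | h
    · omega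
    · omega
    · omega
    · simp at h
  -- step 1: braid move
  have s1 : MarkovEquiv (2*m+3, posR (2*m+2) ++ altR (2*m+2))
      (2*m+3, posR (2*m+1) ++ altR (2*m) ++ [(2*m, false), (2*m+1, true), (2*m, true)]) :=
    Relation.EqvGen.rel _ _ (MarkovStep.braid _ _ _ hwf0 hwf1 (braid_eq1 m))
  -- step 2: conjugation, bring the last letter to the front
  have e2 : posR (2*m+1) ++ altR (2*m) ++ [(2*m, false), (2*m+1, true), (2*m, true)]
      = (posR (2*m+1) ++ altR (2*m) ++ [(2*m, false), (2*m+1, true)]) ++ [(2*m, true)] := by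
    simp
  have s2 : MarkovEquiv
      (2*m+3, posR (2*m+1) ++ altR (2*m) ++ [(2*m, false), (2*m+1, true), (2*m, true)])
      (2*m+3, [(2*m, true)] ++ (posR (2*m+1) ++ altR (2*m) ++ [(2*m, false), (2*m+1, true)])) := by
    rw [e2]
    exact Relation.EqvGen.rel _ _ (MarkovStep.conj _ _ _ (by rw [← e2]; exact hwf1))
  -- step 3: destabilization
  have e3 : [(2*m, true)] ++ (posR (2*m+1) ++ altR (2*m) ++ [(2*m, false), (2*m+1, true)])
      = ([(2*m, true)] ++ (posR (2*m+1) ++ altR (2*m) ++ [(2*m, false)])) ++ [(2*m+1, true)] := by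
    simp
  have hwfY : WF (2*m+2) ([(2*m, true)] ++ (posR (2*m+1) ++ altR (2*m) ++ [(2*m, false)])) := by
    refine WF_append (WF_single h22) (WF_append (WF_append (WF_posR (by omega))
      (WF_altR (by omega))) (WF_single h22))
  have s3 : MarkovEquiv
      (2*m+3, [(2*m, true)] ++ (posR (2*m+1) ++ altR (2*m) ++ [(2*m, false), (2*m+1, true)]))
      (2*m+2, [(2*m, true)] ++ (posR (2*m+1) ++ altR (2*m) ++ [(2*m, false)])) := by
    rw [e3]
    have hst := MarkovStep.stab (2*m+2)
      ([(2*m, true)] ++ (posR (2*m+1) ++ altR (2*m) ++ [(2*m, false)])) true hwfY (by omega)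
    have e : 2*m+2+1 = 2*m+3 := by omega
    have e' : 2*m+2-1 = 2*m+1 := by omega
    rw [e, e'] at hst
    exact Relation.EqvGen.symm _ _ (Relation.EqvGen.rel _ _ hst)
  -- step 4: conjugation back
  have s4 : MarkovEquiv
      (2*m+2, [(2*m, true)] ++ (posR (2*m+1) ++ altR (2*m) ++ [(2*m, false)]))
      (2*m+2, (posR (2*m+1) ++ altR (2*m) ++ [(2*m, false)]) ++ [(2*m, true)]) :=
    Relation.EqvGen.rel _ _ (MarkovStep.conj _ _ _ (by
      refine WF_append (WF_single h22) (WF_append (WF_append (WF_posR (by omega))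
        (WF_altR (by omega))) (WF_single h22))))
  -- step 5: braid move (cancel σ⁻¹σ)
  have s5 : MarkovEquiv
      (2*m+2, (posR (2*m+1) ++ altR (2*m) ++ [(2*m, false)]) ++ [(2*m, true)])
      (2*m+2, posR (2*m+1) ++ altR (2*m)) :=
    Relation.EqvGen.rel _ _ (MarkovStep.braid _ _ _
      (WF_append (WF_append (WF_append (WF_posR (by omega)) (WF_altR (by omega)))
        (WF_single h22)) (WF_single h22))
      (WF_append (WF_posR (by omega)) (WF_altR (by omega))) (braid_eq2 m))
  -- step 6: conjugation
  have s6 : MarkovEquiv (2*m+2, posR (2*m+1) ++ altR (2*m))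
      (2*m+2, altR (2*m) ++ posR (2*m+1)) :=
    Relation.EqvGen.rel _ _ (MarkovStep.conj _ _ _
      (WF_append (WF_posR (by omega)) (WF_altR (by omega))))
  -- step 7: destabilization
  have e7 : altR (2*m) ++ posR (2*m+1) = (altR (2*m) ++ posR (2*m)) ++ [(2*m, true)] := by
    rw [posR_succ]
    simp
  have s7 : MarkovEquiv (2*m+2, altR (2*m) ++ posR (2*m+1))
      (2*m+1, altR (2*m) ++ posR (2*m)) := by
    rw [e7]
    have hst := MarkovStep.stab (2*m+1) (altR (2*m) ++ posR (2*m)) true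
      (WF_append (WF_altR (by omega)) (WF_posR (by omega))) (by omega)
    have e : 2*m+1+1 = 2*m+2 := by omega
    have e' : 2*m+1-1 = 2*m := by omega
    rw [e, e'] at hst
    exact Relation.EqvGen.symm _ _ (Relation.EqvGen.rel _ _ hst)
  -- step 8: conjugation
  have s8 : MarkovEquiv (2*m+1, altR (2*m) ++ posR (2*m))
      (2*m+1, posR (2*m) ++ altR (2*m)) :=
    Relation.EqvGen.rel _ _ (MarkovStep.conj _ _ _
      (WF_append (WF_altR (by omega)) (WF_posR (by omega))))
  exact Relation.EqvGen.trans _ _ _ (Relation.EqvGen.trans _ _ _ (Relation.EqvGen.trans _ _ _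
    (Relation.EqvGen.trans _ _ _ (Relation.EqvGen.trans _ _ _ (Relation.EqvGen.trans _ _ _
      (Relation.EqvGen.trans _ _ _ s1 s2) s3) s4) s5) s6) s7) s8

/-- The modified weaving closure is the unknot (trivial closure). -/
lemma Dtriv (m : ℕ) :
    MarkovEquiv (2*m+3, posR (2*m+2) ++ altR (2*m+2)) (1, ([] : Word)) := by
  induction m with
  | zero =>
      have h := step 0
      simpa [posR, altR] using h
  | succ n ih =>
      have h := step (n+1)
      have e1 : 2*(n+1)+1 = 2*n+3 := by ring
      have e2 : 2*(n+1) = 2*n+2 := by ring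
      rw [e1, e2] at h
      exact Relation.EqvGen.trans _ _ _ h ih

/-- Computing the crossing changes: flipping the odd-position crossings of the
first round makes it all-positive. -/
lemma flip_eq (m : ℕ) :
    flipAt (altR (2*m+2) ++ altR (2*m+2)) ((Finset.range (m+1)).image (fun i => 2*i+1))
      = posR (2*m+2) ++ altR (2*m+2) := by
  have hS : ∀ n, n ∈ (Finset.range (m+1)).image (fun i => 2*i+1) ↔
      n % 2 = 1 ∧ n < 2*m+2 := by
    intro n
    simp only [Finset.mem_image, Finset.mem_range]
    constructor
    · rintro ⟨i, hi, rfl⟩; omega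
    · rintro ⟨h1, h2⟩; exact ⟨n/2, by omega, by omega⟩
  apply List.ext_getElem
  · simp [flipAt, length_posR, length_altR]
  · intro n h1 h2
    have hlen : (altR (2*m+2)).length = 2*m+2 := length_altR _
    have hn4 : n < 2*m+2 + (2*m+2) := by
      simpa [flipAt, hlen] using h1
    have henum : ((altR (2*m+2) ++ altR (2*m+2)).zipIdx)[n]'(by simp [hlen]; omega)
        = ((altR (2*m+2) ++ altR (2*m+2))[n]'(by simp [hlen]; omega), n) := by
      rw [List.getElem_zipIdx, Nat.zero_add]
    simp only [flipAt]
    rw [List.getElem_map, henum]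
    by_cases hn : n < 2*m+2
    · have hL : (altR (2*m+2) ++ altR (2*m+2))[n]'(by simp [hlen]; omega)
          = (n, decide (n % 2 = 0)) := by
        rw [List.getElem_append_left (by omega)]
        simp [altR]
      have hR : (posR (2*m+2) ++ altR (2*m+2))[n]'h2
          = (n, true) := by
        rw [List.getElem_append_left (by simp [length_posR]; omega)]
        simp [posR]
      rw [hL, hR]
      by_cases ho : n % 2 = 1
      · rw [if_pos ((hS n).mpr ⟨ho, hn⟩)]
        simp
        omega
      · rw [if_neg (fun h => ho ((hS n).mp h).1)]
        simp
        omega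
    · have hnot : n ∉ (Finset.range (m+1)).image (fun i => 2*i+1) := by
        intro h
        exact hn ((hS n).mp h).2
      rw [if_neg hnot]
      have hL : (altR (2*m+2) ++ altR (2*m+2))[n]'(by simp [hlen]; omega)
          = (altR (2*m+2))[n - (2*m+2)]'(by simp [hlen]; omega) := by
        rw [List.getElem_append_right (by omega)]
        simp [hlen]
      have hR : (posR (2*m+2) ++ altR (2*m+2))[n]'h2
          = (altR (2*m+2))[n - (2*m+2)]'(by simp [hlen]; omega) := by
        rw [List.getElem_append_right (by simp [length_posR]; omega)]
        simp [length_posR]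
      rw [hL, hR]

end Markov

/-- For odd `p ≥ 3`, the closure of `B_W(p,2)` can be made trivial by `(p-1)/2`
crossing changes on the diagram. -/
theorem braidUnknottingNumber_wWord_two (p : ℕ) (hp : 3 ≤ p) (ho : Odd p) :
    braidUnknottingNumber p (wWord p 2) ≤ (p - 1) / 2 := by
  obtain ⟨k, hk⟩ := ho
  obtain ⟨m, rfl⟩ : ∃ m, p = 2*m+3 := ⟨k-1, by omega⟩
  have hw : wWord (2*m+3) 2 = altR (2*m+2) ++ altR (2*m+2) := by
    have h : wRound (2*m+3) = altR (2*m+2) := by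
      rw [wRound, altR, show 2*m+3-1 = 2*m+2 from by omega]
    simp [wWord, h, List.replicate]
  have hlen : (wWord (2*m+3) 2).length = 2*m+2 + (2*m+2) := by
    rw [hw]; simp [length_altR]
  have hdiv : (2*m+3-1)/2 = m+1 := by omega
  rw [hdiv]
  apply Nat.sInf_le
  refine ⟨(Finset.range (m+1)).image (fun i => 2*i+1), ?_, ?_, ?_⟩
  · intro n hn
    simp only [Finset.mem_image, Finset.mem_range] at hn
    obtain ⟨i, hi, rfl⟩ := hn
    rw [Finset.mem_range, hlen]
    omega
  · rw [Finset.card_image_of_injective _ (fun a b h => by omega), Finset.card_range]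
  · exact ⟨1, by rw [hw, flip_eq]; exact Dtriv m⟩

end Weaving
end

section
/- A weaving link W(p, np) (p ≥ 3, n ≥ 1) is a proper link if and only if p is odd or n is even. -/
namespace Weaving

/-! ### Auxiliary lemmas for the weaving proof -/

lemma permOfWord_append (w₁ w₂ : Word) :
    permOfWord (w₁ ++ w₂) = permOfWord w₂ * permOfWord w₁ := by
  simp [permOfWord]

lemma permOfWord_ladder (b : ℕ → Bool) (m : ℕ) :
    ∀ x, permOfWord ((List.range m).map fun j => (j, b j)) x =
      if x = 0 then m else if x ≤ m then x - 1 else x := by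
  induction m with
  | zero =>
    intro x
    have h : permOfWord ((List.range 0).map fun j => (j, b j)) x = x := by
      simp [permOfWord]
    rw [h]; split_ifs <;> omega
  | succ m ih =>
    intro x
    rw [List.range_succ, List.map_append, permOfWord_append]
    simp only [List.map_cons, List.map_nil]
    have h1 : permOfWord [(m, b m)] = Equiv.swap m (m + 1) := by
      simp [permOfWord, letterPerm]
    rw [h1, Equiv.Perm.mul_apply, ih x]
    by_cases h0 : x = 0
    · subst h0; simp [Equiv.swap_apply_left]
    · by_cases hxm : x ≤ m
      · simp only [if_neg h0, if_pos hxm, if_pos (show x ≤ m + 1 by omega)]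
        exact Equiv.swap_apply_of_ne_of_ne (by omega) (by omega)
      · by_cases hx1 : x = m + 1
        · subst hx1
          simp only [if_neg h0, if_neg hxm, if_pos (le_refl (m + 1))]
          rw [Equiv.swap_apply_right]; omega
        · simp only [if_neg h0, if_neg hxm, if_neg (show ¬ x ≤ m + 1 by omega)]
          exact Equiv.swap_apply_of_ne_of_ne (by omega) (by omega)

lemma permOfWord_wRound (p : ℕ) :
    ∀ x, permOfWord (wRound p) x = if x = 0 then p - 1 else if x ≤ p - 1 then x - 1 else x :=
  permOfWord_ladder _ _

lemma wRound_fix {p x : ℕ} (hp : 1 ≤ p) (hx : p ≤ x) : permOfWord (wRound p) x = x := by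
  rw [permOfWord_wRound]
  have h1 : x ≠ 0 := by omega
  have h2 : ¬ x ≤ p - 1 := by omega
  simp [h1, h2]

lemma wRound_inv_apply {p : ℕ} (hp : 1 ≤ p) {y : ℕ} (hy : y < p) :
    (permOfWord (wRound p))⁻¹ y = (y + 1) % p := by
  have key : permOfWord (wRound p) ((y + 1) % p) = y := by
    by_cases h : y + 1 < p
    · rw [Nat.mod_eq_of_lt h, permOfWord_wRound]
      have h1 : y + 1 ≠ 0 := by omega
      have h2 : y + 1 ≤ p - 1 := by omega
      simp [h1, h2]
    · have hy1 : y + 1 = p := by omega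
      rw [hy1, Nat.mod_self, permOfWord_wRound]
      simp; omega
  conv_lhs => rw [← key]
  rw [Equiv.Perm.inv_eq_iff_eq]

lemma wRound_inv_fix {p x : ℕ} (hp : 1 ≤ p) (hx : p ≤ x) :
    (permOfWord (wRound p))⁻¹ x = x := by
  nth_rewrite 1 [← wRound_fix hp hx]
  rw [Equiv.Perm.inv_eq_iff_eq]

lemma wRound_pow_inv_apply {p : ℕ} (hp : 1 ≤ p) (r : ℕ) {x : ℕ} (hx : x < p) :
    ((permOfWord (wRound p) ^ r)⁻¹) x = (x + r) % p := by
  induction r with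
  | zero => simp [Nat.mod_eq_of_lt hx]
  | succ r ih =>
    rw [pow_succ, mul_inv_rev, Equiv.Perm.mul_apply, ih,
      wRound_inv_apply hp (Nat.mod_lt _ (by omega)), Nat.mod_add_mod, ← Nat.add_assoc]

lemma wRound_pow_inv_fix {p : ℕ} (hp : 1 ≤ p) (r : ℕ) {x : ℕ} (hx : p ≤ x) :
    ((permOfWord (wRound p) ^ r)⁻¹) x = x := by
  induction r with
  | zero => simp
  | succ r ih => rw [pow_succ, mul_inv_rev, Equiv.Perm.mul_apply, ih, wRound_inv_fix hp hx]

lemma wWord_succ (p q : ℕ) : wWord p (q + 1) = wRound p ++ wWord p q := by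
  simp [wWord, List.replicate_succ]

lemma wWord_add (p a b : ℕ) : wWord p (a + b) = wWord p a ++ wWord p b := by
  induction a with
  | zero => simp [wWord]
  | succ a ih => rw [Nat.succ_add, wWord_succ, wWord_succ, ih, List.append_assoc]

lemma length_wRound (p : ℕ) : (wRound p).length = p - 1 := by simp [wRound]

lemma length_wWord (p q : ℕ) : (wWord p q).length = q * (p - 1) := by
  induction q with
  | zero => simp [wWord]
  | succ q ih =>
    rw [wWord_succ, List.length_append, ih, length_wRound]
    ring

lemma permOfWord_wWord (p q : ℕ) : permOfWord (wWord p q) = permOfWord (wRound p) ^ q := by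
  induction q with
  | zero => simp [wWord, permOfWord]
  | succ q ih => rw [wWord_succ, permOfWord_append, ih, pow_succ]

lemma wRound_pow_p {p : ℕ} (hp : 1 ≤ p) : permOfWord (wRound p) ^ p = 1 := by
  have h : ∀ x, ((permOfWord (wRound p) ^ p)⁻¹) x = x := by
    intro x
    by_cases hx : x < p
    · rw [wRound_pow_inv_apply hp p hx, Nat.add_mod_right, Nat.mod_eq_of_lt hx]
    · exact wRound_pow_inv_fix hp p (by omega)
  have h2 : (permOfWord (wRound p) ^ p)⁻¹ = 1 := Equiv.ext h
  calc permOfWord (wRound p) ^ p = ((permOfWord (wRound p) ^ p)⁻¹)⁻¹ := by rw [inv_inv]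
    _ = 1 := by rw [h2]; rfl

lemma permOfWord_wWord_mul (p n : ℕ) (hp : 1 ≤ p) :
    permOfWord (wWord p (n * p)) = 1 := by
  rw [permOfWord_wWord, Nat.mul_comm, pow_mul, wRound_pow_p hp, one_pow]

lemma take_wRound (p k : ℕ) (hk : k ≤ p - 1) :
    (wRound p).take k = (List.range k).map fun j => (j, decide (j % 2 = 0)) := by
  rw [wRound, ← List.map_take, List.take_range, Nat.min_eq_left hk]

lemma take_wWord (p q r k : ℕ) (hr : r < q) (hk : k ≤ p - 1) :
    (wWord p q).take (r * (p - 1) + k) = wWord p r ++ (wRound p).take k := by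
  have hq : q = r + (q - r - 1 + 1) := by omega
  rw [hq, wWord_add, wWord_succ]
  rw [List.take_append]
  have hlen : (wWord p r).length = r * (p - 1) := length_wWord p r
  rw [List.take_of_length_le (by omega), hlen]
  have h2 : r * (p - 1) + k - r * (p - 1) = k := by omega
  rw [h2, List.take_append, length_wRound,
    (show k - (p - 1) = 0 by omega), List.take_zero, List.append_nil]

lemma getD_wWord (p q r k : ℕ) (hr : r < q) (hk : k < p - 1) :
    (wWord p q).getD (r * (p - 1) + k) (0, true) = (k, decide (k % 2 = 0)) := by
  have hq : q = r + (q - r - 1 + 1) := by omega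
  rw [hq, wWord_add, wWord_succ]
  rw [List.getD_append_right _ _ _ _ (by rw [length_wWord]; omega)]
  rw [length_wWord, (show r * (p - 1) + k - r * (p - 1) = k by omega)]
  rw [List.getD_append _ _ _ _ (by rw [length_wRound]; omega)]
  rw [List.getD_eq_getElem _ _ (by rw [length_wRound]; omega)]
  simp [wRound]

lemma permUpTo_wWord (p q r k : ℕ) (hr : r < q) (hk : k ≤ p - 1) :
    permUpTo (wWord p q) (r * (p - 1) + k) =
      permOfWord ((List.range k).map fun j => (j, decide (j % 2 = 0))) *
        permOfWord (wRound p) ^ r := by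
  unfold permUpTo
  rw [take_wWord p q r k hr hk, permOfWord_append, permOfWord_wWord, take_wRound p k hk]

lemma ladder_inv_self (b : ℕ → Bool) (k : ℕ) :
    (permOfWord ((List.range k).map fun j => (j, b j)))⁻¹ k = 0 := by
  have h : permOfWord ((List.range k).map fun j => (j, b j)) 0 = k := by
    rw [permOfWord_ladder]; simp
  rw [Equiv.Perm.inv_eq_iff_eq, h]

lemma ladder_inv_succ (b : ℕ → Bool) (k : ℕ) :
    (permOfWord ((List.range k).map fun j => (j, b j)))⁻¹ (k + 1) = k + 1 := by
  have h : permOfWord ((List.range k).map fun j => (j, b j)) (k + 1) = k + 1 := by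
    rw [permOfWord_ladder]
    have h1 : k + 1 ≠ 0 := by omega
    have h2 : ¬ k + 1 ≤ k := by omega
    simp [h1, h2]
  rw [Equiv.Perm.inv_eq_iff_eq, h]

lemma overLabel_wWord (p q r k : ℕ) (hp : 3 ≤ p) (hr : r < q) (hk : k < p - 1) :
    overLabel (wWord p q) (r * (p - 1) + k) =
      if k % 2 = 0 then r % p else (r + k + 1) % p := by
  have hp1 : 1 ≤ p := by omega
  simp only [overLabel]
  rw [getD_wWord p q r k hr hk, permUpTo_wWord p q r k hr (le_of_lt hk)]
  by_cases hke : k % 2 = 0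
  · simp only [hke, decide_true, if_pos rfl, if_true]
    rw [mul_inv_rev, Equiv.Perm.mul_apply, ladder_inv_self,
      wRound_pow_inv_apply hp1 r (show 0 < p by omega), Nat.zero_add]
  · have : decide (k % 2 = 0) = false := by simp [hke]
    simp only [this, if_neg hke, Bool.false_eq_true, if_false]
    rw [mul_inv_rev, Equiv.Perm.mul_apply, ladder_inv_succ,
      wRound_pow_inv_apply hp1 r (show k + 1 < p by omega)]
    congr 1; omega

lemma underLabel_wWord (p q r k : ℕ) (hp : 3 ≤ p) (hr : r < q) (hk : k < p - 1) :
    underLabel (wWord p q) (r * (p - 1) + k) =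
      if k % 2 = 0 then (r + k + 1) % p else r % p := by
  have hp1 : 1 ≤ p := by omega
  simp only [underLabel]
  rw [getD_wWord p q r k hr hk, permUpTo_wWord p q r k hr (le_of_lt hk)]
  by_cases hke : k % 2 = 0
  · simp only [hke, decide_true, if_pos rfl, if_true]
    rw [mul_inv_rev, Equiv.Perm.mul_apply, ladder_inv_succ,
      wRound_pow_inv_apply hp1 r (show k + 1 < p by omega)]
    congr 1; omega
  · have : decide (k % 2 = 0) = false := by simp [hke]
    simp only [this, if_neg hke, Bool.false_eq_true, if_false]
    rw [mul_inv_rev, Equiv.Perm.mul_apply, ladder_inv_self,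
      wRound_pow_inv_apply hp1 r (show 0 < p by omega), Nat.zero_add]

lemma crossingSign_wWord (p q r k : ℕ) (hr : r < q) (hk : k < p - 1) :
    crossingSign (wWord p q) (r * (p - 1) + k) = if k % 2 = 0 then 1 else -1 := by
  unfold crossingSign
  rw [getD_wWord p q r k hr hk]
  by_cases hke : k % 2 = 0 <;> simp [hke]

lemma orbitMin_wWord (p n : ℕ) (hp : 3 ≤ p) (i : ℕ) :
    orbitMin (wWord p (n * p)) p i = i := by
  unfold orbitMin strandCycle
  rw [permOfWord_wWord_mul p n (by omega)]
  have h1 : ((List.range p).map fun t => (⇑(1 : Equiv.Perm ℕ))^[t] i) = List.replicate p i := by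
    have h2 : ∀ t ∈ List.range p, (⇑(1 : Equiv.Perm ℕ))^[t] i = i := by
      intro t _
      have : ⇑(1 : Equiv.Perm ℕ) = id := rfl
      rw [this]
      simp
    rw [List.map_congr_left h2]
    simp [List.eq_replicate_iff]
  rw [h1, List.replicate_dedup (by omega)]
  simp



lemma sum_range_mul_aux {M : Type*} [AddCommMonoid M] (f : ℕ → M) (q d : ℕ) :
    ∑ m ∈ Finset.range (q * d), f m
      = ∑ r ∈ Finset.range q, ∑ k ∈ Finset.range d, f (r * d + k) := by
  induction q with
  | zero => simp
  | succ q ih =>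
    rw [Nat.succ_mul, Finset.sum_range_add, ih, Finset.sum_range_succ]

lemma sum_range_mod (f : ℕ → ℤ) (n p : ℕ) :
    ∑ r ∈ Finset.range (n * p), f (r % p) = n * ∑ ρ ∈ Finset.range p, f ρ := by
  rw [sum_range_mul_aux (fun m => f (m % p)) n p]
  have h : ∀ a ∈ Finset.range n,
      ∑ k ∈ Finset.range p, f ((a * p + k) % p) = ∑ ρ ∈ Finset.range p, f ρ := by
    intro a _
    refine Finset.sum_congr rfl fun k hk => ?_
    rw [Finset.mem_range] at hk
    rw [Nat.add_comm, Nat.add_mul_mod_self_right, Nat.mod_eq_of_lt hk]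
  rw [Finset.sum_congr rfl h, Finset.sum_const, Finset.card_range, nsmul_eq_mul]

lemma mod_sub (s p : ℕ) (h1 : p ≤ s) (h2 : s < 2 * p) : s % p = s - p := by
  rw [Nat.mod_eq_sub_mod h1, Nat.mod_eq_of_lt (by omega)]

lemma mod_k_eq (p a b : ℕ) (ha : a < p) (hb : b < p) (hab : a ≠ b) :
    (p + b - a - 1) % p = if a < b then b - a - 1 else p + b - a - 1 := by
  by_cases h : a < b
  · rw [if_pos h, mod_sub _ _ (by omega) (by omega)]
    omega
  · rw [if_neg h, Nat.mod_eq_of_lt (by omega)]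

lemma k_lt (p a b : ℕ) (hp : 2 ≤ p) (ha : a < p) (hb : b < p) (hab : a ≠ b) :
    (p + b - a - 1) % p < p - 1 := by
  rw [mod_k_eq p a b ha hb hab]; split_ifs <;> omega

lemma k_add (p a b : ℕ) (hp : 2 ≤ p) (ha : a < p) (hb : b < p) (hab : a ≠ b) :
    (p + b - a - 1) % p + (p + a - b - 1) % p = p - 2 := by
  rw [mod_k_eq p a b ha hb hab, mod_k_eq p b a hb ha hab.symm]
  rcases Nat.lt_or_ge a b with h | h
  · rw [if_pos h, if_neg (by omega)]; omega
  · rw [if_neg (by omega), if_pos (by omega)]; omega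

lemma match_iff (p a b k : ℕ) (ha : a < p) (hb : b < p) (hab : a ≠ b) (hk : k < p - 1) :
    (a + k + 1) % p = b ↔ k = (p + b - a - 1) % p := by
  rw [mod_k_eq p a b ha hb hab]
  by_cases h : a + k + 1 < p
  · rw [Nat.mod_eq_of_lt h]; split_ifs <;> omega
  · rw [mod_sub _ _ (by omega) (by omega)]; split_ifs <;> omega

lemma compLk_wWord_eval (p n a b : ℕ) (hp : 3 ≤ p) (hn : 1 ≤ n)
    (ha : a < p) (hb : b < p) (hab : a ≠ b) :
    compLk p (wWord p (n * p)) a b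
      = (n * ((if ((p + b - a - 1) % p) % 2 = 0 then (1 : ℤ) else -1)
            + (if ((p + a - b - 1) % p) % 2 = 0 then (1 : ℤ) else -1))) / 2 := by
  set w := wWord p (n * p) with hw
  set s1 : ℤ := if ((p + b - a - 1) % p) % 2 = 0 then (1 : ℤ) else -1 with hs1
  set s2 : ℤ := if ((p + a - b - 1) % p) % 2 = 0 then (1 : ℤ) else -1 with hs2
  have key : (∑ m ∈ Finset.range w.length,
      if (orbitMin w p (overLabel w m) = a ∧ orbitMin w p (underLabel w m) = b) ∨
         (orbitMin w p (overLabel w m) = b ∧ orbitMin w p (underLabel w m) = a)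
      then crossingSign w m else 0) = n * (s1 + s2) := by
    rw [hw, length_wWord, sum_range_mul_aux]
    have inner : ∀ r ∈ Finset.range (n * p),
        (∑ k ∈ Finset.range (p - 1),
          if (orbitMin (wWord p (n*p)) p (overLabel (wWord p (n*p)) (r * (p-1) + k)) = a ∧
              orbitMin (wWord p (n*p)) p (underLabel (wWord p (n*p)) (r * (p-1) + k)) = b) ∨
             (orbitMin (wWord p (n*p)) p (overLabel (wWord p (n*p)) (r * (p-1) + k)) = b ∧
              orbitMin (wWord p (n*p)) p (underLabel (wWord p (n*p)) (r * (p-1) + k)) = a)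
          then crossingSign (wWord p (n*p)) (r * (p-1) + k) else 0)
        = (fun ρ => if ρ = a then s1 else if ρ = b then s2 else 0) (r % p) := by
      intro r hr
      rw [Finset.mem_range] at hr
      have step1 : ∀ k ∈ Finset.range (p - 1),
          (if (orbitMin (wWord p (n*p)) p (overLabel (wWord p (n*p)) (r * (p-1) + k)) = a ∧
              orbitMin (wWord p (n*p)) p (underLabel (wWord p (n*p)) (r * (p-1) + k)) = b) ∨
             (orbitMin (wWord p (n*p)) p (overLabel (wWord p (n*p)) (r * (p-1) + k)) = b ∧
              orbitMin (wWord p (n*p)) p (underLabel (wWord p (n*p)) (r * (p-1) + k)) = a)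
          then crossingSign (wWord p (n*p)) (r * (p-1) + k) else 0)
          = (if ((r % p = a ∧ (r + k + 1) % p = b) ∨ (r % p = b ∧ (r + k + 1) % p = a))
              then (if k % 2 = 0 then (1:ℤ) else -1) else 0) := by
        intro k hk
        rw [Finset.mem_range] at hk
        rw [orbitMin_wWord p n hp, orbitMin_wWord p n hp,
          overLabel_wWord p (n*p) r k hp hr hk, underLabel_wWord p (n*p) r k hp hr hk,
          crossingSign_wWord p (n*p) r k hr hk]
        by_cases hke : k % 2 = 0
        · simp only [hke, if_true]
        · simp only [hke, if_false]
          refine if_congr ?_ rfl rfl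
          tauto
      rw [Finset.sum_congr rfl step1]
      simp only []
      by_cases hra : r % p = a
      · rw [if_pos hra]
        have step2 : ∀ k ∈ Finset.range (p - 1),
            (if ((r % p = a ∧ (r + k + 1) % p = b) ∨ (r % p = b ∧ (r + k + 1) % p = a))
              then (if k % 2 = 0 then (1:ℤ) else -1) else 0)
            = (if k = (p + b - a - 1) % p then (if k % 2 = 0 then (1:ℤ) else -1) else 0) := by
          intro k hk
          rw [Finset.mem_range] at hk
          refine if_congr ?_ rfl rfl
          have hτ : (r + k + 1) % p = (a + k + 1) % p := by
            conv_rhs => rw [← hra, Nat.add_assoc, Nat.mod_add_mod, ← Nat.add_assoc]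
          rw [hra, hτ, match_iff p a b k ha hb hab hk]
          have hnab : ¬ (a = b) := hab
          tauto
        rw [Finset.sum_congr rfl step2, Finset.sum_ite_eq' (Finset.range (p-1))]
        rw [if_pos (Finset.mem_range.mpr (k_lt p a b (by omega) ha hb hab))]
      · by_cases hrb : r % p = b
        · rw [if_neg hra, if_pos hrb]
          have step2 : ∀ k ∈ Finset.range (p - 1),
              (if ((r % p = a ∧ (r + k + 1) % p = b) ∨ (r % p = b ∧ (r + k + 1) % p = a))
                then (if k % 2 = 0 then (1:ℤ) else -1) else 0)
              = (if k = (p + a - b - 1) % p then (if k % 2 = 0 then (1:ℤ) else -1) else 0) := by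
            intro k hk
            rw [Finset.mem_range] at hk
            refine if_congr ?_ rfl rfl
            have hτ : (r + k + 1) % p = (b + k + 1) % p := by
              conv_rhs => rw [← hrb, Nat.add_assoc, Nat.mod_add_mod, ← Nat.add_assoc]
            rw [hrb, hτ, match_iff p b a k hb ha hab.symm hk]
            have hnab : ¬ (b = a) := hab.symm
            tauto
          rw [Finset.sum_congr rfl step2, Finset.sum_ite_eq' (Finset.range (p-1))]
          rw [if_pos (Finset.mem_range.mpr (k_lt p b a (by omega) hb ha hab.symm))]
        · rw [if_neg hra, if_neg hrb]
          refine Finset.sum_eq_zero fun k hk => ?_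
          rw [if_neg (by tauto)]
    rw [Finset.sum_congr rfl inner,
      sum_range_mod (fun ρ => if ρ = a then s1 else if ρ = b then s2 else 0) n p]
    congr 1
    have hsplit : ∀ ρ, (fun ρ => if ρ = a then s1 else if ρ = b then s2 else 0) ρ
        = (if ρ = a then s1 else 0) + (if ρ = b then s2 else 0) := by
      intro ρ
      simp only
      split_ifs with h1 h2 <;>
        first
          | (exact absurd (h1.symm.trans h2) hab)
          | ring
    rw [Finset.sum_congr rfl (fun ρ _ => hsplit ρ), Finset.sum_add_distrib,
      Finset.sum_ite_eq' (Finset.range p), Finset.sum_ite_eq' (Finset.range p),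
      if_pos (Finset.mem_range.mpr ha), if_pos (Finset.mem_range.mpr hb)]
  unfold compLk
  rw [key]



lemma compLk_cases (p n a b : ℕ) (hp : 3 ≤ p) (hn : 1 ≤ n)
    (ha : a < p) (hb : b < p) (hab : a ≠ b) :
    (Odd p → compLk p (wWord p (n * p)) a b = 0) ∧
    (Even p → (compLk p (wWord p (n * p)) a b = n ∨ compLk p (wWord p (n * p)) a b = -n)) := by
  have hadd := k_add p a b (by omega) ha hb hab
  rw [compLk_wWord_eval p n a b hp hn ha hb hab]
  generalize hk1 : (p + b - a - 1) % p = k1 at hadd ⊢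
  generalize hk2 : (p + a - b - 1) % p = k2 at hadd ⊢
  constructor
  · intro hodd
    have hp2 : p % 2 = 1 := Nat.odd_iff.mp hodd
    have hpar : (k1 % 2 = 0 ∧ ¬ k2 % 2 = 0) ∨ (¬ k1 % 2 = 0 ∧ k2 % 2 = 0) := by omega
    rcases hpar with ⟨h1, h2⟩ | ⟨h1, h2⟩
    · rw [if_pos h1, if_neg h2]; norm_num
    · rw [if_neg h1, if_pos h2]; norm_num
  · intro heven
    have hp2 : p % 2 = 0 := Nat.even_iff.mp heven
    have hpar : (k1 % 2 = 0 ∧ k2 % 2 = 0) ∨ (¬ k1 % 2 = 0 ∧ ¬ k2 % 2 = 0) := by omega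
    rcases hpar with ⟨h1, h2⟩ | ⟨h1, h2⟩
    · left; rw [if_pos h1, if_pos h2]
      have : ((n : ℤ) * (1 + 1)) = (n : ℤ) * 2 := by ring
      rw [this, Int.mul_ediv_cancel _ (by norm_num)]
    · right; rw [if_neg h1, if_neg h2]
      have : ((n : ℤ) * (-1 + -1)) = (-(n : ℤ)) * 2 := by ring
      rw [this, Int.mul_ediv_cancel _ (by norm_num)]

/-- A weaving link `W(p, np)` (`p ≥ 3`, `n ≥ 1`) is proper iff `p` is odd or `n` is even. -/
theorem weaving_proper_iff (p n : ℕ) (hp : 3 ≤ p) (hn : 1 ≤ n) :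
    IsProper p (wWord p (n * p)) ↔ Odd p ∨ Even n := by
  have himg : (Finset.range p).image (orbitMin (wWord p (n * p)) p) = Finset.range p := by
    have h : ∀ x ∈ Finset.range p, orbitMin (wWord p (n * p)) p x = id x :=
      fun x _ => orbitMin_wWord p n hp x
    rw [Finset.image_congr h, Finset.image_id]
  unfold IsProper
  rw [himg]
  rcases Nat.even_or_odd p with hpe | hpo
  · -- p even
    have key : ∀ a, a < p →
        ((∑ b ∈ (Finset.range p).erase a, compLk p (wWord p (n * p)) a b : ℤ) : ZMod 2)
          = (n : ZMod 2) := by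
      intro a ha
      push_cast
      have hterm : ∀ b ∈ (Finset.range p).erase a,
          ((compLk p (wWord p (n * p)) a b : ℤ) : ZMod 2) = (n : ZMod 2) := by
        intro b hbmem
        obtain ⟨hbne, hbr⟩ := Finset.mem_erase.mp hbmem
        rw [Finset.mem_range] at hbr
        rcases (compLk_cases p n a b hp hn ha hbr hbne.symm).2 hpe with h | h <;> rw [h]
        · push_cast; rfl
        · push_cast
          rw [CharTwo.neg_eq]
      rw [Finset.sum_congr rfl hterm, Finset.sum_const,
        Finset.card_erase_of_mem (Finset.mem_range.mpr ha), Finset.card_range, nsmul_eq_mul]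
      have hcast : ((p - 1 : ℕ) : ZMod 2) = 1 := by
        rw [← ZMod.natCast_mod]
        have h2 : (p - 1) % 2 = 1 := by
          have := Nat.even_iff.mp hpe; omega
        rw [h2, Nat.cast_one]
      rw [hcast, one_mul]
    have hdvd : ∀ a, a < p →
        ((2 : ℤ) ∣ ∑ b ∈ (Finset.range p).erase a, compLk p (wWord p (n * p)) a b ↔
          (n : ZMod 2) = 0) := by
      intro a ha
      rw [show (2 : ℤ) = ((2 : ℕ) : ℤ) by norm_num, ← ZMod.intCast_zmod_eq_zero_iff_dvd,
        key a ha]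
    have hno : ¬ Odd p := by simp [Nat.not_odd_iff_even.mpr hpe]
    have hiff : (∀ a ∈ Finset.range p,
        (2 : ℤ) ∣ ∑ b ∈ (Finset.range p).erase a, compLk p (wWord p (n * p)) a b) ↔ Even n := by
      constructor
      · intro h
        have h0 := (hdvd 0 (by omega)).mp (h 0 (Finset.mem_range.mpr (by omega)))
        rw [ZMod.natCast_eq_zero_iff] at h0
        exact even_iff_two_dvd.mpr h0
      · intro hne a hamem
        refine (hdvd a (Finset.mem_range.mp hamem)).mpr ?_
        rw [ZMod.natCast_eq_zero_iff]
        exact even_iff_two_dvd.mp hne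
    rw [hiff]
    tauto
  · -- p odd
    constructor
    · intro _; exact Or.inl hpo
    · intro _ a hamem
      have ha := Finset.mem_range.mp hamem
      have hz : ∀ b ∈ (Finset.range p).erase a, compLk p (wWord p (n * p)) a b = 0 := by
        intro b hbmem
        obtain ⟨hbne, hbr⟩ := Finset.mem_erase.mp hbmem
        rw [Finset.mem_range] at hbr
        exact (compLk_cases p n a b hp hn ha hbr hbne.symm).1 hpo
      rw [Finset.sum_congr rfl hz, Finset.sum_const_zero]
      exact dvd_zero 2

end Weaving
end
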